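/- A G-graded ring R is graded semisimple if and only if R is graded left Noetherian and graded von Neumann regular. -/

import Mathlib

open DirectSum

universe u v w

variable {G : Type u} [Group G] [DecidableEq G]
variable {R : Type v} [Ring R]

/-- `𝒜` is a `G`-grading of the ring `R`: homogeneous components are additive
subgroups, `1` is homogeneous of trivial degree, multiplication respects degrees,
and `R` is the internal direct sum of the components. -/
def IsGRing (𝒜 : G → AddSubgroup R) : Prop :=
  (1 : R) ∈ 𝒜 1 ∧
  (∀ (g h : G) (a b : R), a ∈ 𝒜 g → b ∈ 𝒜 h → a * b ∈ 𝒜 (g * h)) ∧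
  DirectSum.IsInternal 𝒜

/-- A left ideal is graded when it is spanned by its homogeneous elements. -/
def IsGradedLeftIdeal (𝒜 : G → AddSubgroup R) (I : Submodule R R) : Prop :=
  I = Submodule.span R ((I : Set R) ∩ ⋃ g, (𝒜 g : Set R))

/-- A minimal graded left ideal (a graded-simple graded left submodule of `R`). -/
def IsMinGradedLeftIdeal (𝒜 : G → AddSubgroup R) (S : Submodule R R) : Prop :=
  IsGradedLeftIdeal 𝒜 S ∧ S ≠ ⊥ ∧
    ∀ T : Submodule R R, T ≤ S → IsGradedLeftIdeal 𝒜 T → T = ⊥ ∨ T = S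

/-- A maximal graded left ideal. -/
def IsMaxGradedLeftIdeal (𝒜 : G → AddSubgroup R) (I : Submodule R R) : Prop :=
  IsGradedLeftIdeal 𝒜 I ∧ I ≠ ⊤ ∧
    ∀ J : Submodule R R, IsGradedLeftIdeal 𝒜 J → I < J → J = ⊤

/-- The graded Jacobson radical: intersection of all maximal graded left ideals. -/
def grJacobson (𝒜 : G → AddSubgroup R) : Submodule R R :=
  sInf {I : Submodule R R | IsMaxGradedLeftIdeal 𝒜 I}

/-- Left annihilator of a subset of `R`. -/
def annLset (X : Set R) : Set R := {r : R | ∀ x ∈ X, r * x = 0}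

/-- Right annihilator of a subset of `R`. -/
def annRset (X : Set R) : Set R := {r : R | ∀ x ∈ X, x * r = 0}

/-- Left annihilator of an element, as a left ideal. -/
def annLIdeal (x : R) : Submodule R R where
  carrier := {r : R | r * x = 0}
  add_mem' := by
    intro a b ha hb
    simp only [Set.mem_setOf_eq] at *
    rw [add_mul, ha, hb, add_zero]
  zero_mem' := by simp
  smul_mem' := by
    intro c a ha
    simp only [Set.mem_setOf_eq, smul_eq_mul] at *
    rw [mul_assoc, ha, mul_zero]

/-- A left ideal is essential if it meets every nonzero left ideal nontrivially. -/
def IsEssentialLeftIdeal (I : Submodule R R) : Prop :=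
  ∀ J : Submodule R R, J ≠ ⊥ → I ⊓ J ≠ ⊥

/-- Homogeneous part of degree `g` of the graded singular ideal. -/
def grSingSet (𝒜 : G → AddSubgroup R) (g : G) : Set R :=
  {x : R | x ∈ 𝒜 g ∧ IsEssentialLeftIdeal (annLIdeal x)}

/-- The graded singular ideal `Z^gr(R) = ⊕_g Z^gr(R)_g`. -/
def grSing (𝒜 : G → AddSubgroup R) : AddSubgroup R :=
  AddSubgroup.closure (⋃ g, grSingSet 𝒜 g)

/-- `R` is graded left self-injective (graded Baer criterion): every morphism of
degree `σ` from a graded left ideal to `R` is right multiplication by an element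
of degree `σ`. -/
def GrLeftSelfInjective (𝒜 : G → AddSubgroup R) : Prop :=
  ∀ I : Submodule R R, IsGradedLeftIdeal 𝒜 I → ∀ σ : G, ∀ f : I →ₗ[R] R,
    (∀ (g : G) (x : I), (x : R) ∈ 𝒜 g → f x ∈ 𝒜 (g * σ)) →
    ∃ m ∈ 𝒜 σ, ∀ x : I, f x = (x : R) * m

/-- Ascending chain condition on graded left ideals. -/
def GrLeftNoetherian (𝒜 : G → AddSubgroup R) : Prop :=
  ∀ f : ℕ → Submodule R R, (∀ n, IsGradedLeftIdeal 𝒜 (f n)) → Monotone f →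
    ∃ n, ∀ m, n ≤ m → f m = f n

/-- Descending chain condition on graded left ideals. -/
def GrLeftArtinian (𝒜 : G → AddSubgroup R) : Prop :=
  ∀ f : ℕ → Submodule R R, (∀ n, IsGradedLeftIdeal 𝒜 (f n)) → Antitone f →
    ∃ n, ∀ m, n ≤ m → f m = f n

/-- Graded von Neumann regularity. -/
def GrVNRegular (𝒜 : G → AddSubgroup R) : Prop :=
  ∀ (g : G) (a : R), a ∈ 𝒜 g → ∃ b : R, a = a * b * a

/-- Graded semisimplicity: `R` is the sum of its minimal graded left ideals. -/
def GrSemisimple (𝒜 : G → AddSubgroup R) : Prop :=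
  sSup {S : Submodule R R | IsMinGradedLeftIdeal 𝒜 S} = (⊤ : Submodule R R)

/-- `ℳ` is a `G`-grading of the left `R`-module `M`, compatible with `𝒜`. -/
def IsGModule (𝒜 : G → AddSubgroup R) {M : Type w} [AddCommGroup M] [Module R M]
    (ℳ : G → AddSubgroup M) : Prop :=
  (∀ (g h : G) (a : R) (m : M), a ∈ 𝒜 g → m ∈ ℳ h → a • m ∈ ℳ (g * h)) ∧
  DirectSum.IsInternal ℳ

/-- A submodule is graded when it is spanned by its homogeneous elements. -/
def IsGradedSubmodule {M : Type w} [AddCommGroup M] [Module R M]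
    (ℳ : G → AddSubgroup M) (N : Submodule R M) : Prop :=
  N = Submodule.span R ((N : Set M) ∩ ⋃ g, (ℳ g : Set M))

/-!
Graded left ideals are the left ideals closed under taking homogeneous components. They form a
complete sublattice of all left ideals, which is modular and compactly generated (by the principal
ideals `R ∙ x` with `x` homogeneous). Graded semisimplicity says that this lattice is atomistic,
equivalently complemented, and graded Noetherianity says that it is well-founded for `>`.

If the lattice is complemented, a complement of `R ∙ a` yields `a = a b a`; and since
`⊤ = R ∙ 1` is compact, every direct summand of `⊤` is compact, which gives the ascending chain
condition. Conversely, regularity turns `R ∙ a` into `R ∙ e` for an idempotent `e` of degree `1`,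
and the sum of two such ideals is again of this form. Under the chain condition a maximal such
ideal inside a graded left ideal `I` is `I` itself, and then `R ∙ (1 - e)` is a graded complement
of `I`.
-/

namespace CompleteSublattice

variable {α : Type*} [CompleteLattice α] {L : CompleteSublattice α}

instance [IsModularLattice α] : IsModularLattice L :=
  ⟨fun y _ h ↦ Subtype.coe_le_coe.1 (IsModularLattice.sup_inf_le_assoc_of_le (y : α) h)⟩

theorem isCompactElement_of_isCompactElement_coe {a : L} (ha : IsCompactElement (a : α)) :
    IsCompactElement a := by
  rw [CompleteLattice.isCompactElement_iff_le_of_directed_sSup_le] at ha ⊢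
  intro s hne hdir hle
  obtain ⟨_, ⟨x, hx, rfl⟩, hax⟩ := ha (Subtype.val '' s) (hne.image _)
    (hdir.mono_comp fun _ _ h ↦ h) hle
  exact ⟨x, hx, hax⟩

end CompleteSublattice

section CompactlyGenerated

variable {α : Type*} [CompleteLattice α] [IsModularLattice α] [IsCompactlyGenerated α]

theorem IsCompl.isCompactElement_left (htop : IsCompactElement (⊤ : α)) {a b : α}
    (h : IsCompl a b) : IsCompactElement a := by
  rw [CompleteLattice.isCompactElement_iff_le_of_directed_sSup_le] at htop ⊢
  intro s hne hdir ha
  have ha_eq : a = ⨆ x ∈ s, a ⊓ x := by rw [← hdir.inf_sSup_eq, inf_eq_left.2 ha]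
  obtain ⟨x₀, hx₀⟩ := hne
  obtain ⟨_, ⟨x, hx, rfl⟩, hx_top⟩ :=
    htop ((fun x ↦ b ⊔ a ⊓ x) '' s) ⟨_, x₀, hx₀, rfl⟩
    (hdir.mono_comp fun _ _ h ↦ sup_le_sup_left (inf_le_inf_left a h) b) <| by
      rw [← h.codisjoint.eq_top, sup_le_iff, sSup_image]
      refine ⟨?_, le_iSup₂_of_le x₀ hx₀ le_sup_left⟩
      exact ha_eq.trans_le (iSup₂_mono fun _ _ ↦ le_sup_right)
  refine ⟨x, hx, ?_⟩
  calc a = a ⊓ (b ⊔ a ⊓ x) := (inf_eq_left.2 (le_top.trans hx_top)).symm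
    _ = a ⊓ x := by rw [← inf_sup_assoc_of_le b inf_le_left, h.inf_eq_bot, bot_sup_eq]
    _ ≤ x := inf_le_right

theorem wellFoundedGT_of_complementedLattice [ComplementedLattice α]
    (htop : IsCompactElement (⊤ : α)) : WellFoundedGT α :=
  CompleteLattice.IsSupFiniteCompact.wellFoundedGT α <|
    (CompleteLattice.isSupFiniteCompact_iff_all_elements_compact α).2 fun a ↦
      (exists_isCompl a).elim fun _ h ↦ h.isCompactElement_left htop

end CompactlyGenerated

section Idempotent

variable {e f : R}

theorem IsIdempotentElem.mem_span_singleton_iff (he : IsIdempotentElem e) {x : R} :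
    x ∈ R ∙ e ↔ x * e = x := by
  refine ⟨fun hx ↦ ?_, fun hx ↦ Submodule.mem_span_singleton.2 ⟨x, hx⟩⟩
  obtain ⟨r, rfl⟩ := Submodule.mem_span_singleton.1 hx
  rw [smul_eq_mul, mul_assoc, he.eq]

theorem IsIdempotentElem.isCompl_span_singleton_one_sub (he : IsIdempotentElem e) :
    IsCompl (R ∙ e) (R ∙ (1 - e)) := by
  refine ⟨Submodule.disjoint_def.2 fun x hx hx' ↦ ?_,
    codisjoint_iff.2 (eq_top_iff.2 fun x _ ↦ ?_)⟩
  · rw [he.mem_span_singleton_iff] at hx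
    rw [he.one_sub.mem_span_singleton_iff, mul_sub, mul_one, hx, sub_self] at hx'
    exact hx'.symm
  · have hx : x = x • e + x • (1 - e) := by
      rw [smul_eq_mul, smul_eq_mul, ← mul_add, add_sub_cancel, mul_one]
    rw [hx]
    exact Submodule.add_mem_sup (Submodule.smul_mem _ x (Submodule.mem_span_singleton_self e))
      (Submodule.smul_mem _ x (Submodule.mem_span_singleton_self _))

theorem IsIdempotentElem.span_singleton_sup_eq (he : IsIdempotentElem e)
    (hf : IsIdempotentElem f) (hfe : f * e = 0) :
    IsIdempotentElem (e + f - e * f) ∧ (R ∙ e) ⊔ (R ∙ f) = R ∙ (e + f - e * f) := by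
  have heu : e * (e + f - e * f) = e := by
    rw [mul_sub, mul_add, he.eq, ← mul_assoc, he.eq, add_sub_cancel_right]
  have hfu : f * (e + f - e * f) = f := by
    rw [mul_sub, mul_add, hf.eq, ← mul_assoc, hfe, zero_mul, sub_zero, zero_add]
  have hu : IsIdempotentElem (e + f - e * f) := by
    rw [IsIdempotentElem, sub_mul, add_mul, heu, hfu, mul_assoc, hfu]
  refine ⟨hu, le_antisymm (sup_le ?_ ?_) ?_⟩ <;> rw [Submodule.span_singleton_le_iff_mem]
  · exact Submodule.mem_span_singleton.2 ⟨e, heu⟩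
  · exact Submodule.mem_span_singleton.2 ⟨f, hfu⟩
  · exact sub_mem (Submodule.add_mem_sup (Submodule.mem_span_singleton_self e)
      (Submodule.mem_span_singleton_self f))
      (Submodule.mem_sup_right (Submodule.smul_mem _ e (Submodule.mem_span_singleton_self f)))

theorem exists_eq_mul_mul_of_isCompl_span_singleton {a : R} {K : Submodule R R}
    (h : IsCompl (R ∙ a) K) : ∃ b, a = a * b * a := by
  obtain ⟨y, hy, k, hk, hyk⟩ :=
    Submodule.mem_sup.1 (h.codisjoint.eq_top ▸ Submodule.mem_top (x := (1 : R)))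
  obtain ⟨b, rfl⟩ := Submodule.mem_span_singleton.1 hy
  refine ⟨b, sub_eq_zero.1 <| Submodule.disjoint_def.1 h.disjoint _ ?_ ?_⟩
  · rw [show a - a * b * a = (1 - a * b) • a by rw [smul_eq_mul, sub_mul, one_mul]]
    exact Submodule.smul_mem _ _ (Submodule.mem_span_singleton_self a)
  · rw [show a - a * b * a = a • k by
      rw [sub_eq_iff_eq_add', mul_assoc, smul_eq_mul, ← smul_eq_mul b a, ← mul_add, hyk,
        mul_one]]
    exact K.smul_mem a hk

end Idempotent

section HomogeneousSubmodules

variable {ι A M σ : Type*} [DecidableEq ι] [Semiring A] [AddCommMonoid M] [Module A M]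
  [SetLike σ M] [AddSubmonoidClass σ M] (ℳ : ι → σ) [Decomposition ℳ]

theorem Submodule.isHomogeneous_sSup {S : Set (Submodule A M)}
    (hS : ∀ p ∈ S, p.IsHomogeneous ℳ) : (sSup S).IsHomogeneous ℳ := by
  intro i x hx
  rw [sSup_eq_iSup'] at hx ⊢
  refine Submodule.iSup_induction _ (motive := fun x ↦ (decompose ℳ x i : M) ∈ _) hx
    (fun p y hy ↦ Submodule.mem_iSup_of_mem p (hS p p.2 i hy)) (by simp) fun y z hy hz ↦ ?_
  rw [decompose_add, DirectSum.add_apply, AddMemClass.coe_add]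
  exact add_mem hy hz

theorem Submodule.isHomogeneous_sInf {S : Set (Submodule A M)}
    (hS : ∀ p ∈ S, p.IsHomogeneous ℳ) : (sInf S).IsHomogeneous ℳ := fun i _ hx ↦
  Submodule.mem_sInf.2 fun p hp ↦ hS p hp i (Submodule.mem_sInf.1 hx p hp)

theorem Submodule.IsHomogeneous.eq_span {p : Submodule A M} (hp : p.IsHomogeneous ℳ) :
    p = Submodule.span A ((p : Set M) ∩ ⋃ i, (ℳ i : Set M)) := by
  classical
  refine le_antisymm (fun x hx ↦ ?_) (Submodule.span_le.2 Set.inter_subset_left)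
  rw [← sum_support_decompose ℳ x]
  exact Submodule.sum_mem _ fun i _ ↦
    Submodule.subset_span ⟨hp i hx, Set.mem_iUnion.2 ⟨i, SetLike.coe_mem _⟩⟩

variable (A) in
def homogeneousSubmodules : CompleteSublattice (Submodule A M) :=
  CompleteSublattice.mk' {p | p.IsHomogeneous ℳ}
    (fun _ ↦ Submodule.isHomogeneous_sSup ℳ) (fun _ ↦ Submodule.isHomogeneous_sInf ℳ)

variable {ℳ} in
theorem mem_homogeneousSubmodules {p : Submodule A M} :
    p ∈ homogeneousSubmodules A ℳ ↔ p.IsHomogeneous ℳ :=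
  Iff.rfl

end HomogeneousSubmodules

section GroupGraded

variable {𝒜 : G → AddSubgroup R} [Decomposition 𝒜]
  (hmul : ∀ (g h : G) (a b : R), a ∈ 𝒜 g → b ∈ 𝒜 h → a * b ∈ 𝒜 (g * h))
include hmul

theorem coe_decompose_mul_of_mem_left {g : G} {a : R} (ha : a ∈ 𝒜 g) (r : R) (h : G) :
    (decompose 𝒜 (a * r) (g * h) : R) = a * decompose 𝒜 r h := by
  induction r using Decomposition.inductionOn 𝒜 with
  | zero => simp
  | @homogeneous k r =>
    by_cases hk : k = h
    · subst hk
      rw [decompose_of_mem_same 𝒜 (hmul _ _ _ _ ha r.2), decompose_of_mem_same 𝒜 r.2]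
    · rw [decompose_of_mem_ne 𝒜 (hmul _ _ _ _ ha r.2) (by simpa using hk),
        decompose_of_mem_ne 𝒜 r.2 hk, mul_zero]
  | add x y hx hy => rw [mul_add, decompose_add, DirectSum.add_apply, AddMemClass.coe_add, hx, hy,
      decompose_add, DirectSum.add_apply, AddMemClass.coe_add, mul_add]

theorem coe_decompose_mul_of_mem_right {g : G} {a : R} (ha : a ∈ 𝒜 g) (r : R) (h : G) :
    (decompose 𝒜 (r * a) (h * g) : R) = decompose 𝒜 r h * a := by
  induction r using Decomposition.inductionOn 𝒜 with
  | zero => simp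
  | @homogeneous k r =>
    by_cases hk : k = h
    · subst hk
      rw [decompose_of_mem_same 𝒜 (hmul _ _ _ _ r.2 ha), decompose_of_mem_same 𝒜 r.2]
    · rw [decompose_of_mem_ne 𝒜 (hmul _ _ _ _ r.2 ha) (by simpa using hk),
        decompose_of_mem_ne 𝒜 r.2 hk, zero_mul]
  | add x y hx hy => rw [add_mul, decompose_add, DirectSum.add_apply, AddMemClass.coe_add, hx, hy,
      decompose_add, DirectSum.add_apply, AddMemClass.coe_add, add_mul]

theorem isHomogeneous_span_singleton {g : G} {x : R} (hx : x ∈ 𝒜 g) :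
    (R ∙ x).IsHomogeneous 𝒜 := by
  intro h y hy
  obtain ⟨r, rfl⟩ := Submodule.mem_span_singleton.1 hy
  have := coe_decompose_mul_of_mem_right hmul hx r (h * g⁻¹)
  rw [inv_mul_cancel_right] at this
  rw [smul_eq_mul, this]
  exact Submodule.smul_mem _ _ (Submodule.mem_span_singleton_self x)

theorem isHomogeneous_span {S : Set R} (hS : S ⊆ ⋃ g, (𝒜 g : Set R)) :
    (Submodule.span R S).IsHomogeneous 𝒜 := by
  rw [Submodule.span_eq_iSup_of_singleton_spans, ← sSup_image]
  refine Submodule.isHomogeneous_sSup 𝒜 (Set.forall_mem_image.2 fun x hx ↦ ?_)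
  obtain ⟨g, hxg⟩ := Set.mem_iUnion.1 (hS hx)
  exact isHomogeneous_span_singleton hmul hxg

theorem isGradedLeftIdeal_iff_isHomogeneous {I : Submodule R R} :
    IsGradedLeftIdeal 𝒜 I ↔ I.IsHomogeneous 𝒜 := by
  refine ⟨fun h ↦ ?_, fun h ↦ h.eq_span 𝒜⟩
  rw [h]
  exact isHomogeneous_span hmul Set.inter_subset_right

theorem isCompactlyGenerated_homogeneousSubmodules :
    IsCompactlyGenerated (homogeneousSubmodules R 𝒜) := by
  refine ⟨fun I ↦ ⟨{J | IsCompactElement J ∧ J ≤ I}, fun J hJ ↦ hJ.1,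
    le_antisymm (sSup_le fun J hJ ↦ hJ.2) ?_⟩⟩
  rw [← Subtype.coe_le_coe, (mem_homogeneousSubmodules.1 I.2).eq_span, Submodule.span_le]
  rintro x ⟨hxI, hx⟩
  obtain ⟨g, hxg⟩ := Set.mem_iUnion.1 hx
  let J : homogeneousSubmodules R 𝒜 := ⟨R ∙ x, isHomogeneous_span_singleton hmul hxg⟩
  have hJ : J ∈ {J | IsCompactElement J ∧ J ≤ I} :=
    ⟨CompleteSublattice.isCompactElement_of_isCompactElement_coe
      (Submodule.singleton_span_isCompactElement x),
      (Submodule.span_singleton_le_iff_mem _ _).2 hxI⟩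
  exact Subtype.coe_le_coe.2 (le_sSup hJ) (Submodule.mem_span_singleton_self x)

theorem isMinGradedLeftIdeal_iff_isAtom (J : homogeneousSubmodules R 𝒜) :
    IsMinGradedLeftIdeal 𝒜 J ↔ IsAtom J := by
  constructor
  · rintro ⟨-, hne, hmin⟩
    refine ⟨fun h ↦ hne (congrArg Subtype.val h), fun T hT ↦ Subtype.ext ?_⟩
    exact (hmin T hT.le ((isGradedLeftIdeal_iff_isHomogeneous hmul).2 T.2)).resolve_right
      (Subtype.coe_injective.ne hT.ne)
  · refine fun h ↦ ⟨(isGradedLeftIdeal_iff_isHomogeneous hmul).2 J.2,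
      fun h0 ↦ h.1 (Subtype.ext h0), fun T hTJ hT ↦ ?_⟩
    have hT' := (isGradedLeftIdeal_iff_isHomogeneous hmul).1 hT
    exact (h.le_iff.1 (show (⟨T, hT'⟩ : homogeneousSubmodules R 𝒜) ≤ J from hTJ)).imp
      (congrArg Subtype.val) (congrArg Subtype.val)

theorem grSemisimple_iff_sSup_atoms_eq_top :
    GrSemisimple 𝒜 ↔ sSup {J : homogeneousSubmodules R 𝒜 | IsAtom J} = ⊤ := by
  have hmin : {S : Submodule R R | IsMinGradedLeftIdeal 𝒜 S} =
      Subtype.val '' {J : homogeneousSubmodules R 𝒜 | IsAtom J} := by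
    ext S
    refine ⟨fun hS ↦ ?_, ?_⟩
    · have hS' := (isGradedLeftIdeal_iff_isHomogeneous hmul).1 hS.1
      exact ⟨⟨S, hS'⟩, (isMinGradedLeftIdeal_iff_isAtom hmul ⟨S, hS'⟩).1 hS, rfl⟩
    · rintro ⟨J, hJ, rfl⟩
      exact (isMinGradedLeftIdeal_iff_isAtom hmul J).2 hJ
  rw [GrSemisimple, hmin, ← Subtype.coe_injective.eq_iff]
  rfl

theorem grLeftNoetherian_iff_wellFoundedGT :
    GrLeftNoetherian 𝒜 ↔ WellFoundedGT (homogeneousSubmodules R 𝒜) := by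
  simp only [GrLeftNoetherian, isGradedLeftIdeal_iff_isHomogeneous hmul,
    wellFoundedGT_iff_monotone_chain_condition]
  constructor
  · intro h f
    obtain ⟨n, hn⟩ := h (fun n ↦ f n) (fun n ↦ (f n).2) fun _ _ hab ↦ f.monotone hab
    exact ⟨n, fun m hm ↦ Subtype.ext (hn m hm).symm⟩
  · intro h f hf hmono
    obtain ⟨n, hn⟩ := h ⟨fun n ↦ ⟨f n, hf n⟩, fun _ _ hab ↦ hmono hab⟩
    exact ⟨n, fun m hm ↦ (congrArg Subtype.val (hn m hm)).symm⟩

theorem GrVNRegular.exists_mem_inv_eq_mul_mul (hreg : GrVNRegular 𝒜) {g : G} {a : R}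
    (ha : a ∈ 𝒜 g) : ∃ b ∈ 𝒜 g⁻¹, a = a * b * a := by
  obtain ⟨b, hb⟩ := hreg g a ha
  refine ⟨decompose 𝒜 b g⁻¹, SetLike.coe_mem _, ?_⟩
  have hright := coe_decompose_mul_of_mem_right hmul ha (a * b) 1
  have hleft := coe_decompose_mul_of_mem_left hmul ha b g⁻¹
  rw [one_mul, ← hb, decompose_of_mem_same 𝒜 ha] at hright
  rw [mul_inv_cancel] at hleft
  rwa [hleft] at hright

theorem GrVNRegular.exists_idempotent_span_singleton_eq (hreg : GrVNRegular 𝒜) {g : G} {a : R}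
    (ha : a ∈ 𝒜 g) : ∃ e ∈ 𝒜 1, IsIdempotentElem e ∧ R ∙ a = R ∙ e := by
  obtain ⟨b, hb, hab⟩ := hreg.exists_mem_inv_eq_mul_mul hmul ha
  refine ⟨b * a, by simpa using hmul _ _ _ _ hb ha, ?_, le_antisymm ?_ ?_⟩
  · rw [IsIdempotentElem, mul_assoc, ← mul_assoc a, ← hab]
  · rw [Submodule.span_singleton_le_iff_mem]
    exact Submodule.mem_span_singleton.2 ⟨a, by rw [smul_eq_mul, ← mul_assoc, ← hab]⟩
  · rw [Submodule.span_singleton_le_iff_mem]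
    exact Submodule.smul_mem _ b (Submodule.mem_span_singleton_self a)

theorem GrVNRegular.exists_idempotent_span_singleton_sup_eq (hreg : GrVNRegular 𝒜) {e x : R}
    {g : G} (he1 : e ∈ 𝒜 1) (he : IsIdempotentElem e) (hx : x ∈ 𝒜 g) :
    ∃ u ∈ 𝒜 1, IsIdempotentElem u ∧ (R ∙ e) ⊔ (R ∙ x) = R ∙ u := by
  -- together with `e`, `x - x e` generates the same ideal as `x`, and `(x - x e) e = 0`
  have hx' : x - x * e ∈ 𝒜 g := sub_mem hx (by simpa using hmul _ _ _ _ hx he1)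
  obtain ⟨f, hf1, hf, hxf⟩ := hreg.exists_idempotent_span_singleton_eq hmul hx'
  have hfe : f * e = 0 := by
    obtain ⟨r, rfl⟩ :=
      Submodule.mem_span_singleton.1 (hxf ▸ Submodule.mem_span_singleton_self f)
    rw [smul_eq_mul, mul_assoc, sub_mul, mul_assoc, he.eq, sub_self, mul_zero]
  obtain ⟨hu, hsup⟩ := he.span_singleton_sup_eq hf hfe
  refine ⟨_, sub_mem (add_mem he1 hf1) (by simpa using hmul _ _ _ _ he1 hf1), hu, ?_⟩
  rw [← hsup, ← hxf]
  have hxe (N : Submodule R R) : x * e ∈ (R ∙ e) ⊔ N :=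
    Submodule.mem_sup_left (Submodule.smul_mem _ x (Submodule.mem_span_singleton_self e))
  refine le_antisymm (sup_le le_sup_left ?_) (sup_le le_sup_left ?_) <;>
    rw [Submodule.span_singleton_le_iff_mem]
  · have h := add_mem (Submodule.mem_sup_right (Submodule.mem_span_singleton_self (x - x * e)))
      (hxe _)
    rwa [sub_add_cancel] at h
  · exact sub_mem (Submodule.mem_sup_right (Submodule.mem_span_singleton_self x)) (hxe _)

theorem GrVNRegular.exists_idempotent_eq_span_singleton
    [WellFoundedGT (homogeneousSubmodules R 𝒜)] (hreg : GrVNRegular 𝒜) {I : Submodule R R}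
    (hI : I.IsHomogeneous 𝒜) : ∃ e ∈ 𝒜 1, IsIdempotentElem e ∧ I = R ∙ e := by
  let S : Set (homogeneousSubmodules R 𝒜) := {J | (J : Submodule R R) ≤ I ∧
    ∃ e ∈ 𝒜 1, IsIdempotentElem e ∧ (J : Submodule R R) = R ∙ e}
  obtain ⟨J, ⟨hJI, e, he1, he, hJ⟩, hmax⟩ := wellFounded_gt.has_min S
    ⟨⊥, bot_le, 0, zero_mem _, .zero, (Submodule.span_zero_singleton R).symm⟩
  refine ⟨e, he1, he, le_antisymm ?_ (hJ ▸ hJI)⟩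
  rw [hI.eq_span, Submodule.span_le]
  rintro x ⟨hxI, hx⟩
  obtain ⟨g, hxg⟩ := Set.mem_iUnion.1 hx
  obtain ⟨u, hu1, hu, hsup⟩ := hreg.exists_idempotent_span_singleton_sup_eq hmul he1 he hxg
  let J' : homogeneousSubmodules R 𝒜 := ⟨R ∙ u, isHomogeneous_span_singleton hmul hu1⟩
  have hJJ' : J ≤ J' := show (J : Submodule R R) ≤ R ∙ u from hJ ▸ hsup ▸ le_sup_left
  have hJ'S : J' ∈ S := ⟨show R ∙ u ≤ I from
    hsup ▸ sup_le (hJ ▸ hJI) ((Submodule.span_singleton_le_iff_mem _ _).2 hxI),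
    u, hu1, hu, rfl⟩
  have hx : x ∈ (J' : Submodule R R) :=
    show x ∈ R ∙ u from hsup ▸ Submodule.mem_sup_right (Submodule.mem_span_singleton_self x)
  rwa [← hJJ'.eq_of_not_lt (hmax J' hJ'S), hJ] at hx

theorem GrVNRegular.complementedLattice [WellFoundedGT (homogeneousSubmodules R 𝒜)]
    (hreg : GrVNRegular 𝒜) (h1 : (1 : R) ∈ 𝒜 1) :
    ComplementedLattice (homogeneousSubmodules R 𝒜) :=
  CompleteSublattice.isComplemented_iff.2 fun _ hI ↦
    have ⟨e, he1, he, hIe⟩ := hreg.exists_idempotent_eq_span_singleton hmul hI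
    ⟨R ∙ (1 - e), isHomogeneous_span_singleton hmul (sub_mem h1 he1),
      hIe ▸ he.isCompl_span_singleton_one_sub⟩

theorem grVNRegular_of_complementedLattice [ComplementedLattice (homogeneousSubmodules R 𝒜)] :
    GrVNRegular 𝒜 := by
  intro _ _ ha
  obtain ⟨_, -, hK⟩ := CompleteSublattice.isComplemented_iff.1 ‹_› _
    (isHomogeneous_span_singleton hmul ha)
  exact exists_eq_mul_mul_of_isCompl_span_singleton hK

end GroupGraded

/-- a graded ring is graded semisimple iff it is graded left
Noetherian and graded von Neumann regular. -/
theorem graded_semisimple_iff_noetherian_and_regular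
    (𝒜 : G → AddSubgroup R) (h𝒜 : IsGRing 𝒜) :
    GrSemisimple 𝒜 ↔ GrLeftNoetherian 𝒜 ∧ GrVNRegular 𝒜 := by
  obtain ⟨h1, hmul, hint⟩ := h𝒜
  let : Decomposition 𝒜 := hint.chooseDecomposition
  have := isCompactlyGenerated_homogeneousSubmodules hmul
  rw [grSemisimple_iff_sSup_atoms_eq_top hmul, grLeftNoetherian_iff_wellFoundedGT hmul]
  constructor
  · intro h
    have := complementedLattice_of_sSup_atoms_eq_top h
    exact ⟨wellFoundedGT_of_complementedLattice
      (CompleteSublattice.isCompactElement_of_isCompactElement_coe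
        ((Submodule.fg_iff_compact ⊤).1 Module.Finite.fg_top)),
      grVNRegular_of_complementedLattice hmul⟩
  · rintro ⟨hwf, hreg⟩
    have := hreg.complementedLattice hmul h1
    exact sSup_atoms_eq_top
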